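/- arXiv:2412.20483 — 8 statements merged into one kernel-verified Lean document; each statement's English description precedes it below -/
import Mathlib

section
/- For real numbers A > 0 and θ with 0 < θ < A²/2, define B_m = 1/(2mθ + A² − θ) for m ∈ ℕ. Then the infinite sum Σ_{m=0}^∞ [(A² − θ)B_m + 2θ B_{m+1} − (A² + θ)B_{m+2}] converges and equals 2. -/
open scoped BigOperators

theorem moyal_gauss_bonnet_telescoping (A θ : ℝ) (hA : 0 < A)
    (hθ : 0 < θ) (hθ' : θ < A ^ 2 / 2)
    (B : ℕ → ℝ) (hB : ∀ m : ℕ, B m = 1 / (2 * m * θ + A ^ 2 - θ)) :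
    HasSum (fun m : ℕ =>
      (A ^ 2 - θ) * B m + 2 * θ * B (m + 1) - (A ^ 2 + θ) * B (m + 2)) 2 := by
  have hA2 : θ < A ^ 2 := by nlinarith
  have hden : ∀ m : ℕ, 0 < 2 * (m : ℝ) * θ + A ^ 2 - θ := by
    intro m
    have : (0:ℝ) ≤ (m : ℝ) := Nat.cast_nonneg m
    nlinarith
  have hBpos : ∀ m : ℕ, 0 < B m := by
    intro m; rw [hB m]; exact one_div_pos.mpr (hden m)
  have hmono : ∀ m : ℕ, B (m + 1) ≤ B m := by
    intro m
    rw [hB m, hB (m + 1)]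
    apply one_div_le_one_div_of_le (hden m)
    push_cast; nlinarith
  set g : ℕ → ℝ := fun n => (A ^ 2 - θ) * B n + (A ^ 2 + θ) * B (n + 1) with hg
  have hterm : ∀ m : ℕ,
      (A ^ 2 - θ) * B m + 2 * θ * B (m + 1) - (A ^ 2 + θ) * B (m + 2)
        = g m - g (m + 1) := by
    intro m; simp only [hg]; ring
  have hnonneg : ∀ m : ℕ,
      0 ≤ (A ^ 2 - θ) * B m + 2 * θ * B (m + 1) - (A ^ 2 + θ) * B (m + 2) := by
    intro m
    have h1 := hmono m
    have h2 := hmono (m + 1)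
    have h3 : B (m + 2) ≤ B m := le_trans (by simpa using h2) h1
    have h4 : B (m + 2) ≤ B (m + 1) := by simpa using h2
    nlinarith [hBpos (m + 2)]
  rw [hasSum_iff_tendsto_nat_of_nonneg hnonneg]
  have hsum : ∀ n : ℕ,
      (∑ i ∈ Finset.range n,
        ((A ^ 2 - θ) * B i + 2 * θ * B (i + 1) - (A ^ 2 + θ) * B (i + 2)))
        = g 0 - g n := by
    intro n
    calc (∑ i ∈ Finset.range n,
        ((A ^ 2 - θ) * B i + 2 * θ * B (i + 1) - (A ^ 2 + θ) * B (i + 2)))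
        = ∑ i ∈ Finset.range n, (g i - g (i + 1)) := by
          exact Finset.sum_congr rfl fun i _ => hterm i
      _ = g 0 - g n := Finset.sum_range_sub' g n
  simp only [hsum]
  have hBlim : Filter.Tendsto B Filter.atTop (nhds 0) := by
    have hd : Filter.Tendsto (fun n : ℕ => 2 * (n : ℝ) * θ + A ^ 2 - θ)
        Filter.atTop Filter.atTop := by
      have heq2 : (fun n : ℕ => 2 * (n : ℝ) * θ + A ^ 2 - θ)
          = fun n : ℕ => (n : ℝ) * (2 * θ) + (A ^ 2 - θ) := by
        funext n; ring
      rw [heq2]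
      apply Filter.tendsto_atTop_add_const_right
      exact Filter.Tendsto.atTop_mul_const (by positivity)
        tendsto_natCast_atTop_atTop
    have := hd.inv_tendsto_atTop
    have heq : B = fun n : ℕ => (2 * (n : ℝ) * θ + A ^ 2 - θ)⁻¹ := by
      funext n; rw [hB n, one_div]
    rw [heq]
    exact this
  have hglim : Filter.Tendsto g Filter.atTop (nhds 0) := by
    have h1 : Filter.Tendsto (fun n : ℕ => B (n + 1)) Filter.atTop (nhds 0) :=
      hBlim.comp (Filter.tendsto_add_atTop_nat 1)
    have := ((hBlim.const_mul (A ^ 2 - θ)).add (h1.const_mul (A ^ 2 + θ)))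
    simpa using this
  have hg0 : g 0 = 2 := by
    simp only [hg, hB 0, hB 1]
    push_cast
    have h1 : A ^ 2 - θ ≠ 0 := by nlinarith
    have h2 : A ^ 2 + θ ≠ 0 := by nlinarith
    field_simp
    linear_combination mul_inv_cancel₀ h1 + mul_inv_cancel₀ h2
  have h := (tendsto_const_nhds (x := g 0) (f := Filter.atTop)).sub hglim
  rw [sub_zero] at h
  simp only [hg0] at h ⊢
  exact h
end

section
/- For A > 0 and 0 < θ < A²/2, the sum 2πθ · Σ_{m=0}^∞ 8(2θA²m + A⁴ − 2θ² + θA²)/[(2θm + A² + θ)(2θm + A² − θ)(2θm + A² + 3θ)] equals 8π, independent of θ. -/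
open Real Filter Topology

set_option maxHeartbeats 1000000

theorem moyal_gauss_bonnet (A θ : ℝ) (hA : 0 < A)
    (hθ : 0 < θ) (hθ' : θ < A ^ 2 / 2) :
    HasSum (fun m : ℕ =>
      2 * π * θ * (8 * (2 * θ * A ^ 2 * m + A ^ 4 - 2 * θ ^ 2 + θ * A ^ 2) /
        ((2 * θ * m + A ^ 2 + θ) * (2 * θ * m + A ^ 2 - θ) * (2 * θ * m + A ^ 2 + 3 * θ))))
      (8 * π) := by
  have hA2 : θ < A ^ 2 := by nlinarith
  set f : ℕ → ℝ := fun m =>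
    (8 * θ * A ^ 2 * m + 4 * A ^ 4 - 4 * θ ^ 2) /
      ((2 * θ * m + A ^ 2 - θ) * (2 * θ * m + A ^ 2 + θ)) with hf
  have hden1 : ∀ m : ℕ, 0 < 2 * θ * (m : ℝ) + A ^ 2 - θ := by
    intro m
    have hm : (0 : ℝ) ≤ m := Nat.cast_nonneg m
    nlinarith
  have hden2 : ∀ m : ℕ, 0 < 2 * θ * (m : ℝ) + A ^ 2 + θ := by
    intro m
    have hm : (0 : ℝ) ≤ m := Nat.cast_nonneg m
    nlinarith
  have hden3 : ∀ m : ℕ, 0 < 2 * θ * (m : ℝ) + A ^ 2 + 3 * θ := by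
    intro m
    have hm : (0 : ℝ) ≤ m := Nat.cast_nonneg m
    nlinarith
  -- telescoping identity
  have hstep : ∀ m : ℕ, θ * (8 * (2 * θ * A ^ 2 * m + A ^ 4 - 2 * θ ^ 2 + θ * A ^ 2) /
        ((2 * θ * m + A ^ 2 + θ) * (2 * θ * m + A ^ 2 - θ) * (2 * θ * m + A ^ 2 + 3 * θ)))
        = f m - f (m + 1) := by
    intro m
    have h1 : (2 * θ * (m : ℝ) + A ^ 2 - θ) ≠ 0 := ne_of_gt (hden1 m)
    have h2 : (2 * θ * (m : ℝ) + A ^ 2 + θ) ≠ 0 := ne_of_gt (hden2 m)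
    have h3 : (2 * θ * (m : ℝ) + A ^ 2 + 3 * θ) ≠ 0 := ne_of_gt (hden3 m)
    have h1' : (2 * θ * ((m : ℝ) + 1) + A ^ 2 - θ) ≠ 0 := by
      have := hden2 m; intro h; apply h2; linarith [h]
    have h2' : (2 * θ * ((m : ℝ) + 1) + A ^ 2 + θ) ≠ 0 := by
      have := hden3 m; intro h; apply h3; linarith [h]
    simp only [hf]
    push_cast
    have e4 : θ * 2 * (m:ℝ) + A ^ 2 - θ ≠ 0 := by linarith [hden1 m]
    have e5 : θ * 2 * ((m:ℝ) + 1) + A ^ 2 - θ ≠ 0 := by linarith [hden2 m]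
    field_simp
    ring
  -- tendsto of f to 0
  have hlin : Tendsto (fun m : ℕ => 2 * θ * (m : ℝ)) atTop atTop :=
    (tendsto_natCast_atTop_atTop).const_mul_atTop (by linarith)
  have ht1 : Tendsto (fun m : ℕ => 2 * θ * (m : ℝ) + A ^ 2 - θ) atTop atTop := by
    have := tendsto_atTop_add_const_right atTop (A ^ 2 - θ) hlin
    refine this.congr fun m => by ring
  have ht2 : Tendsto (fun m : ℕ => 2 * θ * (m : ℝ) + A ^ 2 + θ) atTop atTop := by
    have := tendsto_atTop_add_const_right atTop (A ^ 2 + θ) hlin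
    refine this.congr fun m => by ring
  have hdecomp : ∀ m : ℕ, f m = 4 * A ^ 2 / (2 * θ * m + A ^ 2 + θ) +
      (4 * θ * (A ^ 2 - θ)) / ((2 * θ * m + A ^ 2 - θ) * (2 * θ * m + A ^ 2 + θ)) := by
    intro m
    have h1 : (2 * θ * (m : ℝ) + A ^ 2 - θ) ≠ 0 := ne_of_gt (hden1 m)
    have h2 : (2 * θ * (m : ℝ) + A ^ 2 + θ) ≠ 0 := ne_of_gt (hden2 m)
    simp only [hf]
    have e1 : θ * (m:ℝ) * 2 + A ^ 2 - θ ≠ 0 := by linarith [hden1 m]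
    field_simp
    ring
  have hftend : Tendsto f atTop (𝓝 0) := by
    have t1 : Tendsto (fun m : ℕ => 4 * A ^ 2 / (2 * θ * (m : ℝ) + A ^ 2 + θ)) atTop (𝓝 0) :=
      tendsto_const_nhds.div_atTop ht2
    have t2 : Tendsto (fun m : ℕ =>
        (4 * θ * (A ^ 2 - θ)) / ((2 * θ * (m : ℝ) + A ^ 2 - θ) * (2 * θ * (m : ℝ) + A ^ 2 + θ)))
        atTop (𝓝 0) :=
      tendsto_const_nhds.div_atTop (ht1.atTop_mul_atTop₀ ht2)
    have := t1.add t2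
    rw [add_zero] at this
    exact this.congr fun m => (hdecomp m).symm
  have hf0 : f 0 = 4 := by
    have h1 : (A ^ 2 - θ) ≠ 0 := ne_of_gt (by linarith)
    have h2 : (A ^ 2 + θ) ≠ 0 := ne_of_gt (by positivity)
    simp only [hf]
    push_cast
    simp only [Nat.cast_zero, mul_zero, zero_add]
    field_simp
    ring
  have hsum : HasSum (fun m : ℕ => θ * (8 * (2 * θ * A ^ 2 * m + A ^ 4 - 2 * θ ^ 2 + θ * A ^ 2) /
        ((2 * θ * m + A ^ 2 + θ) * (2 * θ * m + A ^ 2 - θ) * (2 * θ * m + A ^ 2 + 3 * θ)))) 4 := by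
    have hnn : ∀ m : ℕ, 0 ≤ θ * (8 * (2 * θ * A ^ 2 * m + A ^ 4 - 2 * θ ^ 2 + θ * A ^ 2) /
        ((2 * θ * m + A ^ 2 + θ) * (2 * θ * m + A ^ 2 - θ) * (2 * θ * m + A ^ 2 + 3 * θ))) := by
      intro m
      have hm : (0 : ℝ) ≤ m := Nat.cast_nonneg m
      have hnum : 0 ≤ 8 * (2 * θ * A ^ 2 * (m : ℝ) + A ^ 4 - 2 * θ ^ 2 + θ * A ^ 2) := by
        nlinarith [mul_lt_mul_of_pos_left hθ' hθ, mul_pos hθ (pow_pos hA 2),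
          mul_nonneg hm (mul_nonneg hθ.le (pow_pos hA 2).le), mul_pos (pow_pos hA 2) (pow_pos hA 2)]
      have hden : 0 < (2 * θ * (m : ℝ) + A ^ 2 + θ) * (2 * θ * (m : ℝ) + A ^ 2 - θ) *
          (2 * θ * (m : ℝ) + A ^ 2 + 3 * θ) :=
        mul_pos (mul_pos (hden2 m) (hden1 m)) (hden3 m)
      exact mul_nonneg hθ.le (div_nonneg hnum hden.le)
    rw [hasSum_iff_tendsto_nat_of_nonneg hnn]
    have hps : ∀ n : ℕ, ∑ i ∈ Finset.range n,
        (θ * (8 * (2 * θ * A ^ 2 * i + A ^ 4 - 2 * θ ^ 2 + θ * A ^ 2) /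
        ((2 * θ * i + A ^ 2 + θ) * (2 * θ * i + A ^ 2 - θ) * (2 * θ * i + A ^ 2 + 3 * θ))))
        = f 0 - f n := by
      intro n
      rw [Finset.sum_congr rfl fun i _ => hstep i]
      exact Finset.sum_range_sub' f n
    have htend : Tendsto (fun n : ℕ => (4 : ℝ) - f n) atTop (𝓝 4) := by
      have := Tendsto.sub (tendsto_const_nhds : Tendsto (fun _ : ℕ => (4 : ℝ)) atTop (𝓝 4)) hftend
      rwa [sub_zero] at this
    exact Tendsto.congr (fun n => by rw [hps n, hf0]) htend
  have hmul := hsum.mul_left (2 * π)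
  have heq : (fun m : ℕ => 2 * π * θ * (8 * (2 * θ * A ^ 2 * m + A ^ 4 - 2 * θ ^ 2 + θ * A ^ 2) /
        ((2 * θ * m + A ^ 2 + θ) * (2 * θ * m + A ^ 2 - θ) * (2 * θ * m + A ^ 2 + 3 * θ))))
      = fun m : ℕ => 2 * π * (θ * (8 * (2 * θ * A ^ 2 * m + A ^ 4 - 2 * θ ^ 2 + θ * A ^ 2) /
        ((2 * θ * m + A ^ 2 + θ) * (2 * θ * m + A ^ 2 - θ) * (2 * θ * m + A ^ 2 + 3 * θ)))) := by
      funext m; ring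
  rw [heq]
  rw [show (8 : ℝ) * π = 2 * π * 4 by ring]
  exact hmul
end

section
/- For A > 0 and 0 < θ < A²/2, and for each m ∈ ℕ, setting φ_m = (2θm + A² + θ)/(2A²), the quantity (2/θ)·φ_m·[ (m+1)(φ_{m+1}² − φ_m²)/φ_{m+1} − m(φ_m² − φ_{m−1}²)/φ_{m−1} ] equals 2/A² − 2θ(A² + θ)/(A⁴(2θm + A² + 3θ)) + 2θ(A² − θ)/(A⁴(2θm + A² − θ)), where the term with m = 0 containing φ_{m−1} is interpreted as 0. -/
theorem moyal_sphere_curvature_coeff (A θ : ℝ) (hA : 0 < A)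
    (hθ : 0 < θ) (hθ' : θ < A ^ 2 / 2)
    (φ : ℕ → ℝ) (hφ : ∀ m : ℕ, φ m = (2 * θ * m + A ^ 2 + θ) / (2 * A ^ 2)) (m : ℕ) :
    2 / θ * φ m *
        ((m + 1 : ℝ) * (φ (m + 1) ^ 2 - φ m ^ 2) / φ (m + 1)
          - (m : ℝ) * (φ m ^ 2 - φ (m - 1) ^ 2) / φ (m - 1)) =
      2 / A ^ 2 - 2 * θ * (A ^ 2 + θ) / (A ^ 4 * (2 * θ * m + A ^ 2 + 3 * θ))
        + 2 * θ * (A ^ 2 - θ) / (A ^ 4 * (2 * θ * m + A ^ 2 - θ)) := by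
  have hA2 : (0:ℝ) < A ^ 2 := by positivity
  have hθA : θ < A ^ 2 := by linarith
  have hpos : ∀ n : ℕ, 0 < 2 * θ * n + A ^ 2 + θ := by
    intro n
    have : (0:ℝ) ≤ 2 * θ * n := by positivity
    linarith
  have h3 : 0 < 2 * θ * m + A ^ 2 + 3 * θ := by
    have : (0:ℝ) ≤ 2 * θ * m := by positivity
    linarith
  have hm1 : 0 < 2 * θ * m + A ^ 2 - θ := by
    have : (0:ℝ) ≤ 2 * θ * m := by positivity
    linarith
  rcases m with _ | n
  · simp only [hφ]
    push_cast
    have h0 : A ^ 2 - θ ≠ 0 := by linarith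
    have h0' : A ^ 2 + θ ≠ 0 := by positivity
    have h0'' : A ^ 2 + 3 * θ ≠ 0 := by positivity
    field_simp [h0]
    ring
  · have hpm : 0 < 2 * θ * (n:ℝ) + A ^ 2 + θ := hpos n
    have hpm1 : 0 < 2 * θ * ((n:ℝ) + 1) + A ^ 2 + θ := by
      have := hpos (n+1); push_cast at this; linarith
    have hpm2 : 0 < 2 * θ * ((n:ℝ) + 2) + A ^ 2 + θ := by
      have := hpos (n+2); push_cast at this; linarith
    simp only [hφ, Nat.add_sub_cancel]
    push_cast
    have e3 : 2 * θ * ((n:ℝ)+1) + A ^ 2 + 3 * θ = 2 * θ * ((n:ℝ) + 2) + A ^ 2 + θ := by ring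
    have em1 : 2 * θ * ((n:ℝ)+1) + A ^ 2 - θ = 2 * θ * (n:ℝ) + A ^ 2 + θ := by ring
    rw [e3, em1]
    field_simp [hpm.ne', hpm1.ne', hpm2.ne', hθ.ne', hA.ne']
    ring
end

section
/- For λ > 0, the value γ₁(λ) = (λ/2)·Σ_{k=0}^∞ 1/(k + (λ+1)/2)² satisfies 0 < γ₁(λ) < 1. -/
open Filter Topology

theorem moyal_gamma_one_bounds (lam : ℝ) (hlam : 0 < lam) :
    0 < lam / 2 * ∑' k : ℕ, 1 / ((k : ℝ) + (lam + 1) / 2) ^ 2 ∧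
      lam / 2 * ∑' k : ℕ, 1 / ((k : ℝ) + (lam + 1) / 2) ^ 2 < 1 := by
  set f : ℕ → ℝ := fun k => 1 / ((k : ℝ) + (lam + 1) / 2) ^ 2 with hf
  set g : ℕ → ℝ := fun k => 1 / ((k : ℝ) + lam / 2) - 1 / ((k : ℝ) + 1 + lam / 2) with hg
  have hpos : ∀ k : ℕ, (0:ℝ) < (k : ℝ) + lam / 2 := fun k => by positivity
  have hfpos : ∀ k : ℕ, 0 < f k := fun k => by
    have : (0:ℝ) < (k : ℝ) + (lam + 1) / 2 := by positivity
    simp only [hf]; positivity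
  have hfg : ∀ k : ℕ, f k < g k := by
    intro k
    have h1 : (0:ℝ) < (k : ℝ) + lam / 2 := hpos k
    have h2 : (0:ℝ) < (k : ℝ) + 1 + lam / 2 := by positivity
    have h3 : (0:ℝ) < ((k : ℝ) + (lam + 1) / 2) ^ 2 := by positivity
    have key : g k = 1 / (((k : ℝ) + lam / 2) * ((k : ℝ) + 1 + lam / 2)) := by
      simp only [hg]; field_simp; ring
    rw [key]
    apply one_div_lt_one_div_of_lt (by positivity)
    nlinarith
  -- HasSum for g via telescoping
  have hgnn : ∀ k : ℕ, 0 ≤ g k := fun k => le_of_lt ((hfpos k).trans (hfg k))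
  have hsum : ∀ n : ℕ, ∑ i ∈ Finset.range n, g i = 1 / (lam / 2) - 1 / ((n : ℝ) + lam / 2) := by
    intro n
    have := Finset.sum_range_sub' (f := fun i : ℕ => 1 / ((i : ℝ) + lam / 2)) n
    push_cast at this
    simp only [hg]
    simpa using this
  have htend : Tendsto (fun n : ℕ => (1 : ℝ) / ((n : ℝ) + lam / 2)) atTop (nhds 0) := by
    have h1 : Tendsto (fun n : ℕ => ((n : ℝ) + lam / 2)) atTop atTop :=
      tendsto_atTop_add_const_right _ _ tendsto_natCast_atTop_atTop
    simpa [one_div, Pi.inv_def] using h1.inv_tendsto_atTop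
  have hHS : HasSum g (1 / (lam / 2)) := by
    rw [hasSum_iff_tendsto_nat_of_nonneg hgnn]
    simp only [hsum]
    simpa using (tendsto_const_nhds (x := 1 / (lam / 2))).sub htend
  have hgsum : Summable g := hHS.summable
  have hfsum : Summable f :=
    Summable.of_nonneg_of_le (fun k => (hfpos k).le) (fun k => (hfg k).le) hgsum
  constructor
  · have := Summable.tsum_pos hfsum (fun k => (hfpos k).le) 0 (hfpos 0)
    positivity
  · have hlt : ∑' k, f k < ∑' k, g k :=
      Summable.tsum_lt_tsum_of_nonneg (fun k => (hfpos k).le) (fun k => (hfg k).le) (hfg 0) hgsum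
    have hgval : ∑' k, g k = 2 / lam := by
      rw [hHS.tsum_eq]; field_simp
    have : lam / 2 * ∑' k, f k < lam / 2 * (2 / lam) := by
      apply mul_lt_mul_of_pos_left _ (by positivity)
      rw [← hgval]; exact hlt
    calc lam / 2 * ∑' k, f k < lam / 2 * (2 / lam) := this
      _ = 1 := by field_simp
end

section
/- For M ≥ 1 a natural number and λ > 0, define γ_M(λ) = (2^{M−1} λ^M / √π)·Γ(M + 1/2)·Σ_{k=0}^∞ C(k+M−1, M−1)/(k + λ/2 + M/2)^{2M}, where C(n,r) is a binomial coefficient. Then the series converges and γ_M(λ) → 1 as λ → ∞. -/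
open Filter Topology Real Finset

noncomputable def moyalP (b : ℝ) (n : ℕ) : ℝ := ∏ j ∈ Finset.range n, (b + j)

lemma moyalP_pos {b : ℝ} (hb : 0 < b) (n : ℕ) : 0 < moyalP b n := by
  apply Finset.prod_pos
  intro j _
  positivity

lemma moyalP_succ (b : ℝ) (n : ℕ) : moyalP b (n + 1) = moyalP b n * (b + n) := by
  simp [moyalP, Finset.prod_range_succ]

lemma moyalP_succ' (b : ℝ) (n : ℕ) : moyalP b (n + 1) = b * moyalP (b + 1) n := by
  rw [moyalP, Finset.prod_range_succ']
  rw [mul_comm]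
  congr 1
  · simp
  · rw [moyalP]
    apply Finset.prod_congr rfl
    intro j _
    push_cast
    ring

lemma moyalP_lb {b : ℝ} (hb : 0 < b) (k : ℕ) (n : ℕ) :
    min b 1 * ((k : ℝ) + 1) ^ n ≤ moyalP ((k : ℝ) + b) n := by
  induction n with
  | zero => simp [moyalP, min_le_iff.mpr (Or.inr le_rfl)]
  | succ n ih =>
      rw [moyalP_succ, pow_succ]
      have h1 : (0:ℝ) < (k:ℝ) + 1 := by positivity
      have h2 : ((k:ℝ) + 1) ≤ (k : ℝ) + b + n → True := fun _ => trivial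
      rcases Nat.eq_zero_or_pos n with hn | hn
      · subst hn
        simp [moyalP]
        rcases le_total b 1 with h | h
        · rw [min_eq_left h]
          nlinarith
        · rw [min_eq_right h]
          nlinarith
      · have hkn : ((k:ℝ) + 1) ≤ (k:ℝ) + b + n := by
          have : (1:ℝ) ≤ n := by exact_mod_cast hn
          nlinarith
        calc min b 1 * (((k:ℝ)+1)^n * ((k:ℝ)+1))
            = (min b 1 * ((k:ℝ)+1)^n) * ((k:ℝ)+1) := by ring
          _ ≤ moyalP ((k:ℝ)+b) n * ((k:ℝ)+b+n) := by
              apply mul_le_mul ih hkn (le_of_lt h1) (le_of_lt (moyalP_pos (by positivity) n))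

lemma choose_cast_le (p k : ℕ) :
    ((Nat.choose (k + p) p : ℕ) : ℝ) ≤ ((p:ℝ)+1)^p * ((k:ℝ)+1)^p := by
  have h1 : Nat.choose (k+p) p ≤ (k+p)^p := Nat.choose_le_pow _ _
  have h2 : ((k+p : ℕ) : ℝ)^p ≤ (((p:ℝ)+1) * ((k:ℝ)+1))^p := by
    apply pow_le_pow_left₀ (by positivity)
    push_cast
    nlinarith [Nat.cast_nonneg (α := ℝ) k, Nat.cast_nonneg (α := ℝ) p]
  calc ((Nat.choose (k + p) p : ℕ) : ℝ) ≤ ((k+p : ℕ) : ℝ)^p := by exact_mod_cast h1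
    _ ≤ (((p:ℝ)+1) * ((k:ℝ)+1))^p := h2
    _ = ((p:ℝ)+1)^p * ((k:ℝ)+1)^p := mul_pow _ _ _

lemma summable_aux {f : ℕ → ℝ} (C : ℝ) (h : ∀ k, 0 ≤ f k ∧ f k ≤ C / ((k:ℝ)+1)^2) :
    Summable f := by
  apply Summable.of_nonneg_of_le (fun k => (h k).1) (fun k => (h k).2)
  apply Summable.mul_left
  have hs : Summable (fun n : ℕ => 1 / ((n:ℝ))^2) := summable_one_div_nat_pow.mpr one_lt_two
  have := (summable_nat_add_iff 1).mpr hs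
  apply this.congr
  intro n
  push_cast
  rw [one_div]

lemma summable_P (p q : ℕ) (hpq : p + 2 ≤ q) {b : ℝ} (hb : 0 < b) :
    Summable (fun k : ℕ => (Nat.choose (k + p) p : ℝ) / moyalP ((k:ℝ) + b) q) := by
  apply summable_aux (((p:ℝ)+1)^p / min b 1)
  intro k
  have hP : 0 < moyalP ((k:ℝ) + b) q := moyalP_pos (by positivity) q
  have hm : 0 < min b 1 := lt_min hb one_pos
  constructor
  · positivity
  · have hden : min b 1 * ((k:ℝ)+1)^(p+2) ≤ moyalP ((k:ℝ) + b) q := by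
      calc min b 1 * ((k:ℝ)+1)^(p+2) ≤ min b 1 * ((k:ℝ)+1)^q := by
            apply mul_le_mul_of_nonneg_left _ (le_of_lt hm)
            exact pow_le_pow_right₀ (by linarith [Nat.cast_nonneg (α := ℝ) k]) hpq
        _ ≤ _ := moyalP_lb hb k q
    calc (Nat.choose (k + p) p : ℝ) / moyalP ((k:ℝ) + b) q
        ≤ (((p:ℝ)+1)^p * ((k:ℝ)+1)^p) / (min b 1 * ((k:ℝ)+1)^(p+2)) := by
          apply div_le_div₀ (by positivity) (choose_cast_le p k) (by positivity) hden
      _ = ((p:ℝ)+1)^p / min b 1 / ((k:ℝ)+1)^2 := by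
          rw [pow_add]
          field_simp

lemma summable_pow (p q : ℕ) (hpq : p + 2 ≤ q) {a : ℝ} (ha : 0 < a) :
    Summable (fun k : ℕ => (Nat.choose (k + p) p : ℝ) / ((k:ℝ) + a) ^ q) := by
  apply summable_aux (((p:ℝ)+1)^p / (min a 1)^q)
  intro k
  have hka : (0:ℝ) < (k:ℝ) + a := by positivity
  have hm : 0 < min a 1 := lt_min ha one_pos
  constructor
  · positivity
  · have hbase : min a 1 * ((k:ℝ)+1) ≤ (k:ℝ) + a := by
      rcases le_total a 1 with h | h
      · rw [min_eq_left h]; nlinarith [Nat.cast_nonneg (α := ℝ) k]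
      · rw [min_eq_right h]; nlinarith [Nat.cast_nonneg (α := ℝ) k]
    have hden : (min a 1)^q * ((k:ℝ)+1)^(p+2) ≤ ((k:ℝ) + a)^q := by
      calc (min a 1)^q * ((k:ℝ)+1)^(p+2) ≤ (min a 1)^q * ((k:ℝ)+1)^q := by
            apply mul_le_mul_of_nonneg_left _ (by positivity)
            exact pow_le_pow_right₀ (by linarith [Nat.cast_nonneg (α := ℝ) k]) hpq
        _ = (min a 1 * ((k:ℝ)+1))^q := (mul_pow _ _ _).symm
        _ ≤ ((k:ℝ) + a)^q := pow_le_pow_left₀ (by positivity) hbase q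
    calc (Nat.choose (k + p) p : ℝ) / ((k:ℝ) + a)^q
        ≤ (((p:ℝ)+1)^p * ((k:ℝ)+1)^p) / ((min a 1)^q * ((k:ℝ)+1)^(p+2)) := by
          apply div_le_div₀ (by positivity) (choose_cast_le p k) (by positivity) hden
      _ = ((p:ℝ)+1)^p / (min a 1)^q / ((k:ℝ)+1)^2 := by
          rw [pow_add]
          field_simp

lemma hasSum_one_div_P (m : ℕ) {y : ℝ} (hy : 0 < y) :
    HasSum (fun k : ℕ => 1 / moyalP ((k:ℝ) + y) (m + 2))
      (1 / (((m:ℝ) + 1) * moyalP y (m + 1))) := by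
  set f : ℕ → ℝ := fun k => 1 / moyalP ((k:ℝ) + y) (m + 2) with hf
  set G : ℕ → ℝ := fun k => 1 / (((m:ℝ) + 1) * moyalP ((k:ℝ) + y) (m + 1)) with hG
  have hfn : ∀ k, 0 ≤ f k := by
    intro k
    have := moyalP_pos (b := (k:ℝ) + y) (by positivity) (m+2)
    positivity
  have key : ∀ k : ℕ, f k = G k - G (k + 1) := by
    intro k
    set y' : ℝ := (k:ℝ) + y with hy'
    have hy'pos : 0 < y' := by positivity
    set Q : ℝ := moyalP (y' + 1) m with hQ
    have hQpos : 0 < Q := moyalP_pos (by positivity) m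
    have e1 : moyalP y' (m + 1) = y' * Q := moyalP_succ' y' m
    have e2 : moyalP (y' + 1) (m + 1) = Q * (y' + 1 + m) := moyalP_succ (y'+1) m
    have e3 : moyalP y' (m + 2) = y' * (Q * (y' + 1 + m)) := by
      rw [moyalP_succ' y' (m+1), e2]
    have ecast : ((k+1 : ℕ) : ℝ) + y = y' + 1 := by push_cast; ring
    show 1 / moyalP y' (m+2) = 1 / (((m:ℝ)+1) * moyalP y' (m+1))
        - 1 / (((m:ℝ)+1) * moyalP (((k+1:ℕ):ℝ) + y) (m+1))
    rw [ecast, e1, e2, e3]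
    have h1 : (0:ℝ) < y' + 1 + (m:ℝ) := by positivity
    have h2 : (0:ℝ) < (m:ℝ) + 1 := by positivity
    field_simp
    ring
  have hsum : Summable f := by
    have := summable_P 0 (m + 2) (by omega) hy
    apply this.congr
    intro k
    simp [hf]
  rw [(hasSum_iff_tendsto_nat_of_nonneg hfn _)]
  have hps : ∀ N : ℕ, ∑ k ∈ Finset.range N, f k = G 0 - G N := by
    intro N
    calc ∑ k ∈ Finset.range N, f k = ∑ k ∈ Finset.range N, (G k - G (k+1)) :=
          Finset.sum_congr rfl (fun k _ => key k)
      _ = G 0 - G N := Finset.sum_range_sub' G N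
  have hG0 : G 0 = 1 / (((m:ℝ) + 1) * moyalP y (m + 1)) := by
    simp [hG]
  have hGlim : Tendsto G atTop (𝓝 0) := by
    have hmono : Tendsto (fun N : ℕ => ((m:ℝ) + 1) * moyalP ((N:ℝ) + y) (m+1)) atTop atTop := by
      have hm : 0 < min y 1 := lt_min hy one_pos
      apply tendsto_atTop_mono (f := fun N : ℕ => min y 1 * ((N:ℝ) + 1))
      · intro N
        calc min y 1 * ((N:ℝ)+1) = min y 1 * ((N:ℝ)+1)^1 := by ring
          _ ≤ min y 1 * ((N:ℝ)+1)^(m+1) := by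
              apply mul_le_mul_of_nonneg_left _ (le_of_lt hm)
              apply pow_le_pow_right₀ (by linarith [Nat.cast_nonneg (α := ℝ) N]) (by omega)
          _ ≤ moyalP ((N:ℝ) + y) (m+1) := moyalP_lb hy N (m+1)
          _ ≤ ((m:ℝ)+1) * moyalP ((N:ℝ) + y) (m+1) := by
              nlinarith [moyalP_pos (b := (N:ℝ) + y) (by positivity) (m+1),
                Nat.cast_nonneg (α := ℝ) m]
      · apply Tendsto.const_mul_atTop hm
        apply tendsto_atTop_add_const_right
        exact tendsto_natCast_atTop_atTop
    have := hmono.inv_tendsto_atTop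
    apply this.congr
    intro N
    simp [hG, one_div]
  have hlim : Tendsto (fun N => G 0 - G N) atTop (𝓝 (G 0)) := by
    simpa using tendsto_const_nhds.sub hGlim
  rw [← hG0]
  exact Tendsto.congr (fun N => (hps N).symm) hlim

lemma hockey (p : ℕ) : ∀ k : ℕ,
    ∑ i ∈ Finset.range (k + 1), Nat.choose (i + p) p = Nat.choose (k + p + 1) (p + 1) := by
  intro k
  induction k with
  | zero => simp
  | succ k ih =>
      rw [Finset.sum_range_succ, ih, show k + 1 + p = k + p + 1 from by omega,
        Nat.choose_succ_succ (k + p + 1) p]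
      simp only [Nat.succ_eq_add_one]
      omega

lemma master : ∀ p q : ℕ, p + 2 ≤ q → ∀ {b : ℝ}, 0 < b →
    HasSum (fun k : ℕ => (Nat.choose (k + p) p : ℝ) / moyalP ((k:ℝ) + b) q)
      ((Nat.factorial (q - p - 2) : ℝ) /
        ((Nat.factorial (q - 1) : ℝ) * moyalP b (q - p - 1))) := by
  intro p
  induction p with
  | zero =>
      intro q hq b hb
      obtain ⟨m, rfl⟩ : ∃ m, q = m + 2 := ⟨q - 2, by omega⟩
      have h := hasSum_one_div_P m hb
      have hval : ((Nat.factorial (m + 2 - 0 - 2) : ℝ) /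
          ((Nat.factorial (m + 2 - 1) : ℝ) * moyalP b (m + 2 - 0 - 1)))
          = 1 / (((m:ℝ) + 1) * moyalP b (m + 1)) := by
        have e1 : m + 2 - 0 - 2 = m := by omega
        have e2 : m + 2 - 1 = m + 1 := by omega
        have e3 : m + 2 - 0 - 1 = m + 1 := by omega
        rw [e1, e2, e3, Nat.factorial_succ]
        have hP := moyalP_pos hb (m+1)
        have hf := Nat.factorial_pos m
        push_cast
        rw [div_eq_div_iff (by positivity) (by positivity)]
        ring
      rw [hval]
      apply h.congr_fun
      intro k
      simp
  | succ p IH =>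
      intro q hq b hb
      obtain ⟨t, rfl⟩ : ∃ t, q = t + 3 := ⟨q - 3, by omega⟩
      have hpt : p ≤ t := by omega
      set c : ℕ → ℝ := fun i => (Nat.choose (i + p) p : ℝ) with hc
      have hcnn : ∀ i, 0 ≤ c i := fun i => Nat.cast_nonneg _
      set F : ℕ → ℝ := fun k => (Nat.choose (k + (p+1)) (p+1) : ℝ) / moyalP ((k:ℝ) + b) (t+3)
        with hF
      have hFnn : ∀ k, 0 ≤ F k := by
        intro k
        have := moyalP_pos (b := (k:ℝ) + b) (by positivity) (t+3)
        positivity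
      have hFs : Summable F := summable_P (p+1) (t+3) (by omega) hb
      -- inner closed forms
      have hPit : ∀ i : ℕ, 0 < moyalP ((i:ℝ) + b) (t+2) :=
        fun i => moyalP_pos (by positivity) (t+2)
      have hinner : ∀ i : ℕ, HasSum (fun m : ℕ => c i / moyalP ((m:ℝ) + ((i:ℝ) + b)) (t+3))
          (c i / (((t:ℝ) + 2) * moyalP ((i:ℝ) + b) (t+2))) := by
        intro i
        have h := (hasSum_one_div_P (t+1) (y := (i:ℝ) + b) (by positivity)).mul_left (c i)
        have e : ((t:ℝ) + 1 + 1) = (t:ℝ) + 2 := by ring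
        simp only [mul_one_div] at h
        have e2 : c i / (((t:ℝ) + 2) * moyalP ((i:ℝ) + b) (t+2))
            = c i / ((((t+1 : ℕ) : ℝ) + 1) * moyalP ((i:ℝ) + b) (t+1+1)) := by push_cast; ring
        rw [e2]
        exact h
      -- IH applied with q := t+2
      have hIH := IH (t + 2) (by omega) hb
      have e1 : t + 2 - p - 2 = t - p := by omega
      have e2 : t + 2 - 1 = t + 1 := by omega
      have e3 : t + 2 - p - 1 = t + 1 - p := by omega
      rw [e1, e2, e3] at hIH
      set V : ℝ := (Nat.factorial (t - p) : ℝ) / ((Nat.factorial (t+1) : ℝ) * moyalP b (t+1-p))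
        with hV
      have hVnn : 0 ≤ V := by
        have := moyalP_pos hb (t+1-p)
        have := Nat.factorial_pos (t+1)
        positivity
      have houter : HasSum (fun i : ℕ => c i / (((t:ℝ) + 2) * moyalP ((i:ℝ) + b) (t+2)))
          (V / ((t:ℝ) + 2)) := by
        have h := hIH.mul_left (1 / ((t:ℝ) + 2))
        have hveq : V / ((t:ℝ) + 2) = 1 / ((t:ℝ) + 2) * V := by ring
        rw [hveq]
        apply h.congr_fun
        intro i
        have hP := hPit i
        rw [hc]
        field_simp
      have houters : Summable (fun i : ℕ => c i / (((t:ℝ) + 2) * moyalP ((i:ℝ) + b) (t+2))) :=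
        houter.summable
      have honn : ∀ i, 0 ≤ c i / (((t:ℝ) + 2) * moyalP ((i:ℝ) + b) (t+2)) := by
        intro i
        have := hPit i
        have := hcnn i
        positivity
      -- the ENNReal swap
      set g : ℕ → ℕ → ENNReal := fun i k =>
        if i ≤ k then ENNReal.ofReal (c i / moyalP ((k:ℝ) + b) (t+3)) else 0 with hg
      have step1 : ENNReal.ofReal (∑' k, F k) = ∑' k, ENNReal.ofReal (F k) :=
        ENNReal.ofReal_tsum_of_nonneg hFnn hFs
      have step2 : ∀ k : ℕ, ENNReal.ofReal (F k) = ∑' i, g i k := by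
        intro k
        have hsplit : F k = ∑ i ∈ Finset.range (k+1), c i / moyalP ((k:ℝ) + b) (t+3) := by
          rw [hF]
          simp only [hc, ← Finset.sum_div]
          congr 1
          rw [show k + (p+1) = k + p + 1 from by omega, ← hockey p k]
          push_cast
          ring
        rw [hsplit, ENNReal.ofReal_sum_of_nonneg]
        · rw [tsum_eq_sum (s := Finset.range (k+1)) (f := fun i => g i k)]
          · apply Finset.sum_congr rfl
            intro i hi
            rw [hg]
            simp only []
            rw [if_pos (by simpa [Nat.lt_succ_iff] using Finset.mem_range.mp hi)]
          · intro i hi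
            rw [hg]
            simp only []
            rw [if_neg (by simpa [Nat.lt_succ_iff] using fun h => hi (Finset.mem_range.mpr
              (Nat.lt_succ_of_le h)))]
        · intro i _
          have := moyalP_pos (b := (k:ℝ) + b) (by positivity) (t+3)
          have := hcnn i
          positivity
      have step4 : ∀ i : ℕ, ∑' k, g i k
          = ENNReal.ofReal (c i / (((t:ℝ) + 2) * moyalP ((i:ℝ) + b) (t+2))) := by
        intro i
        have hinj : Function.Injective (fun m : ℕ => m + i) := add_left_injective i
        have hsupp : Function.support (fun k => g i k) ⊆ Set.range (fun m : ℕ => m + i) := by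
          intro k hk
          by_contra hkr
          apply hk
          have hik : ¬ i ≤ k := fun hik => hkr ⟨k - i, by simp; omega⟩
          rw [hg]
          simp only []
          rw [if_neg hik]
        rw [← Function.Injective.tsum_eq hinj hsupp]
        have : ∀ m : ℕ, g i (m + i) = ENNReal.ofReal
            (c i / moyalP ((m:ℝ) + ((i:ℝ) + b)) (t+3)) := by
          intro m
          rw [hg]
          simp only []
          rw [if_pos (Nat.le_add_left i m)]
          congr 2
          push_cast
          ring
        rw [tsum_congr this]
        rw [← ENNReal.ofReal_tsum_of_nonneg _ (hinner i).summable]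
        · rw [(hinner i).tsum_eq]
        · intro m
          have := moyalP_pos (b := (m:ℝ) + ((i:ℝ) + b)) (by positivity) (t+3)
          have := hcnn i
          positivity
      have step6 : ∑' (i:ℕ), ENNReal.ofReal (c i / (((t:ℝ) + 2) * moyalP ((i:ℝ) + b) (t+2)))
          = ENNReal.ofReal (V / ((t:ℝ) + 2)) := by
        rw [← ENNReal.ofReal_tsum_of_nonneg honn houters, houter.tsum_eq]
      have main : ENNReal.ofReal (∑' k, F k) = ENNReal.ofReal (V / ((t:ℝ) + 2)) := by
        rw [step1]
        rw [tsum_congr step2, ENNReal.tsum_comm, tsum_congr step4, step6]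
      have htsum : ∑' k, F k = V / ((t:ℝ) + 2) := by
        have h0 : 0 ≤ ∑' k, F k := tsum_nonneg hFnn
        have h1 : 0 ≤ V / ((t:ℝ) + 2) := by positivity
        exact (ENNReal.ofReal_eq_ofReal_iff h0 h1).mp main
      have hfinal : V / ((t:ℝ) + 2)
          = (Nat.factorial (t + 3 - (p+1) - 2) : ℝ) /
            ((Nat.factorial (t + 3 - 1) : ℝ) * moyalP b (t + 3 - (p+1) - 1)) := by
        have f1 : t + 3 - (p+1) - 2 = t - p := by omega
        have f2 : t + 3 - 1 = t + 2 := by omega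
        have f3 : t + 3 - (p+1) - 1 = t + 1 - p := by omega
        rw [f1, f2, f3, hV]
        have : Nat.factorial (t+2) = (t+2) * Nat.factorial (t+1) := rfl
        rw [this]
        have hP := moyalP_pos hb (t+1-p)
        have hf := Nat.factorial_pos (t+1)
        push_cast
        rw [div_div, div_eq_div_iff (by positivity) (by positivity)]
        ring
      rw [← hfinal]
      exact (Summable.hasSum_iff hFs).mpr htsum

lemma pow_le_moyalP {x : ℝ} (hx : 0 ≤ x) (n : ℕ) : x ^ n ≤ moyalP x n := by
  calc x^n = ∏ _j ∈ Finset.range n, x := by rw [Finset.prod_const, Finset.card_range]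
    _ ≤ ∏ j ∈ Finset.range n, (x + (j:ℝ)) :=
        Finset.prod_le_prod (fun j _ => hx)
          (fun j _ => le_add_of_nonneg_right (Nat.cast_nonneg j))

lemma moyalP_le_pow {y x : ℝ} (n : ℕ) (hy : 0 ≤ y) (h : ∀ j : ℕ, j < n → y + (j:ℝ) ≤ x) :
    moyalP y n ≤ x ^ n := by
  calc moyalP y n ≤ ∏ _j ∈ Finset.range n, x :=
        Finset.prod_le_prod (fun j _ => by positivity)
          (fun j hj => h j (Finset.mem_range.mp hj))
    _ = x^n := by rw [Finset.prod_const, Finset.card_range]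

lemma tendsto_ratio (β : ℝ) : Tendsto (fun lam : ℝ => lam / (lam / 2 + β)) atTop (𝓝 2) := by
  have h0 : Tendsto (fun lam : ℝ => β / lam) atTop (𝓝 0) :=
    tendsto_const_nhds.div_atTop tendsto_id
  have h1 : Tendsto (fun lam : ℝ => 1 / (1/2 + β / lam)) atTop (𝓝 (1 / (1/2 + 0))) :=
    Tendsto.div tendsto_const_nhds (tendsto_const_nhds.add h0) (by norm_num)
  rw [show (1:ℝ)/(1/2+0) = 2 by norm_num] at h1
  apply Tendsto.congr' _ h1
  filter_upwards [eventually_ge_atTop (2*|β|+1)] with lam hl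
  have hb1 : |β| ≥ 0 := abs_nonneg β
  have hb2 : -|β| ≤ β := neg_abs_le β
  have hb3 : β ≤ |β| := le_abs_self β
  have hlam : 0 < lam := by linarith
  have hden : 0 < lam/2 + β := by linarith
  rw [show 1/2 + β/lam = (lam/2 + β)/lam by field_simp, one_div_div]

lemma tendsto_prod_ratio (n : ℕ) (β : ℝ) :
    Tendsto (fun lam : ℝ => ∏ j ∈ Finset.range n, (lam / (lam/2 + β + (j:ℝ)))) atTop
      (𝓝 (2^n)) := by
  have h := tendsto_finset_prod (f := fun (j : ℕ) (lam : ℝ) => lam / (lam/2 + (β + (j:ℝ))))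
    (a := fun _ => (2:ℝ)) (Finset.range n) (fun j _ => tendsto_ratio (β + (j:ℝ)))
  rw [Finset.prod_const, Finset.card_range] at h
  apply h.congr
  intro lam
  apply Finset.prod_congr rfl
  intro j _
  rw [add_assoc]

lemma const_eq_one (p : ℕ) :
    (2:ℝ)^p * Real.Gamma ((p:ℝ) + 1 + 1/2) / Real.sqrt π * (Nat.factorial p : ℝ) /
      (Nat.factorial (2*p+1) : ℝ) * 2^(p+1) = 1 := by
  have hdup := Real.Gamma_mul_Gamma_add_half ((p:ℝ)+1)
  rw [Real.Gamma_nat_eq_factorial p] at hdup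
  have hrp : (2:ℝ)^((1:ℝ) - 2*((p:ℝ)+1)) = ((2:ℝ)^(2*p+1 : ℕ))⁻¹ := by
    rw [show (1:ℝ) - 2*((p:ℝ)+1) = -((2*p+1 : ℕ) : ℝ) by push_cast; ring,
      Real.rpow_neg (by norm_num), Real.rpow_natCast]
  rw [hrp] at hdup
  rw [show (2:ℝ) * ((p:ℝ)+1) = ((2*p+1 : ℕ) : ℝ) + 1 by push_cast; ring,
    Real.Gamma_nat_eq_factorial (2*p+1)] at hdup
  have hpi : (0:ℝ) < Real.sqrt π := Real.sqrt_pos.mpr Real.pi_pos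
  have hf1 : (0:ℝ) < (Nat.factorial p : ℝ) := by exact_mod_cast Nat.factorial_pos p
  have hf2 : (0:ℝ) < (Nat.factorial (2*p+1) : ℝ) := by exact_mod_cast Nat.factorial_pos (2*p+1)
  have h2p : (0:ℝ) < (2:ℝ)^(2*p+1 : ℕ) := by positivity
  have hΓ : Real.Gamma ((p:ℝ) + 1 + 1/2) =
      (Nat.factorial (2*p+1) : ℝ) * ((2:ℝ)^(2*p+1 : ℕ))⁻¹ * Real.sqrt π /
        (Nat.factorial p : ℝ) := by
    rw [eq_div_iff (ne_of_gt hf1)]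
    linarith [hdup]
  rw [hΓ]
  field_simp
  ring


theorem moyal_gamma_M_limit (M : ℕ) (hM : 1 ≤ M) :
    (∀ lam : ℝ, 0 < lam →
      Summable (fun k : ℕ =>
        (Nat.choose (k + M - 1) (M - 1) : ℝ) / (k + lam / 2 + M / 2) ^ (2 * M))) ∧
    Filter.Tendsto
      (fun lam : ℝ =>
        2 ^ (M - 1) * lam ^ M / Real.sqrt π * Real.Gamma (M + 1 / 2) *
          ∑' k : ℕ, (Nat.choose (k + M - 1) (M - 1) : ℝ) / (k + lam / 2 + M / 2) ^ (2 * M))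
      Filter.atTop (nhds 1) := by
  obtain ⟨p, rfl⟩ : ∃ p, M = p + 1 := ⟨M - 1, by omega⟩
  have hq : p + 2 ≤ 2 * (p + 1) := by omega
  have hchoose : ∀ k : ℕ, k + (p + 1) - 1 = k + p := fun k => by omega
  have hsub : p + 1 - 1 = p := by omega
  simp only [hsub, hchoose]
  push_cast
  constructor
  · intro lam hlam
    have ha : (0:ℝ) < lam / 2 + ((p:ℝ)+1) / 2 := by positivity
    apply (summable_pow p (2*(p+1)) hq ha).congr
    intro k
    congr 2
    ring
  · set Gm : ℝ := Real.Gamma ((p:ℝ) + 1 + 1/2) with hGm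
    have hGmpos : 0 < Gm := Real.Gamma_pos_of_pos (by positivity)
    have hpi : (0:ℝ) < Real.sqrt π := Real.sqrt_pos.mpr Real.pi_pos
    have hf1 : (0:ℝ) < (Nat.factorial p : ℝ) := by exact_mod_cast Nat.factorial_pos p
    have hf2 : (0:ℝ) < (Nat.factorial (2*p+1) : ℝ) := by
      exact_mod_cast Nat.factorial_pos (2*p+1)
    set D : ℝ := 2^p * Gm / Real.sqrt π * (Nat.factorial p : ℝ) /
      (Nat.factorial (2*p+1) : ℝ) with hD
    have hBlim : ∀ β : ℝ, Tendsto
        (fun lam : ℝ => D * ∏ j ∈ Finset.range (p+1), (lam / (lam/2 + β + (j:ℝ))))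
        atTop (𝓝 1) := by
      intro β
      have h := (tendsto_prod_ratio (p+1) β).const_mul D
      rwa [show D * 2^(p+1) = 1 from by rw [hD, hGm]; exact const_eq_one p] at h
    apply tendsto_of_tendsto_of_tendsto_of_le_of_le'
      (hBlim (((p:ℝ)+1)/2)) (hBlim (((p:ℝ)+1)/2 - (2*(p:ℝ)+1)))
    · filter_upwards [eventually_ge_atTop (4*((p:ℝ)+1)+1)] with lam hl
      have hp0 : (0:ℝ) ≤ (p:ℝ) := Nat.cast_nonneg p
      have hlam : (0:ℝ) < lam := by linarith
      set a : ℝ := lam/2 + ((p:ℝ)+1)/2 with hadef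
      have ha : 0 < a := by rw [hadef]; positivity
      have hbase : ∀ k : ℕ, (k:ℝ) + lam/2 + ((p:ℝ)+1)/2 = (k:ℝ) + a := by
        intro k; rw [hadef]; ring
      simp only [hbase]
      have hPa : 0 < moyalP a (p+1) := moyalP_pos ha (p+1)
      have hlow := master p (2*(p+1)) hq ha
      rw [show 2*(p+1)-p-2 = p from by omega, show 2*(p+1)-1 = 2*p+1 from by omega,
        show 2*(p+1)-p-1 = p+1 from by omega] at hlow
      have hmid : Summable (fun k : ℕ =>
          (Nat.choose (k+p) p : ℝ) / ((k:ℝ) + a) ^ (2*(p+1))) :=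
        summable_pow p (2*(p+1)) hq ha
      have cpos : (0:ℝ) ≤ 2^p * lam^(p+1) / Real.sqrt π * Gm := by positivity
      have hprod1 : ∏ j ∈ Finset.range (p+1), (lam / (a + (j:ℝ)))
          = lam^(p+1) / moyalP a (p+1) := by
        rw [Finset.prod_div_distrib, Finset.prod_const, Finset.card_range, moyalP]
      have h1 : (Nat.factorial p : ℝ) / ((Nat.factorial (2*p+1) : ℝ) * moyalP a (p+1))
          ≤ ∑' k : ℕ, (Nat.choose (k+p) p : ℝ) / ((k:ℝ) + a) ^ (2*(p+1)) := by
        rw [← hlow.tsum_eq]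
        apply Summable.tsum_le_tsum _ hlow.summable hmid
        intro k
        apply div_le_div_of_nonneg_left (Nat.cast_nonneg _) (by positivity)
          (pow_le_moyalP (by positivity) _)
      calc D * ∏ j ∈ Finset.range (p+1), (lam / (a + (j:ℝ)))
          = (2^p * lam^(p+1) / Real.sqrt π * Gm) *
            ((Nat.factorial p : ℝ) / ((Nat.factorial (2*p+1) : ℝ) * moyalP a (p+1))) := by
            rw [hprod1, hD]
            field_simp
        _ ≤ (2^p * lam^(p+1) / Real.sqrt π * Gm) *
            ∑' k : ℕ, (Nat.choose (k+p) p : ℝ) / ((k:ℝ) + a) ^ (2*(p+1)) :=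
            mul_le_mul_of_nonneg_left h1 cpos
    · filter_upwards [eventually_ge_atTop (4*((p:ℝ)+1)+1)] with lam hl
      have hp0 : (0:ℝ) ≤ (p:ℝ) := Nat.cast_nonneg p
      have hlam : (0:ℝ) < lam := by linarith
      set a : ℝ := lam/2 + ((p:ℝ)+1)/2 with hadef
      have ha : 0 < a := by rw [hadef]; positivity
      have ha' : 0 < a - (2*(p:ℝ)+1) := by rw [hadef]; push_cast; linarith
      have hbase : ∀ k : ℕ, (k:ℝ) + lam/2 + ((p:ℝ)+1)/2 = (k:ℝ) + a := by
        intro k; rw [hadef]; ring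
      simp only [hbase]
      have hPa' : 0 < moyalP (a - (2*(p:ℝ)+1)) (p+1) := moyalP_pos ha' (p+1)
      have hupp := master p (2*(p+1)) hq ha'
      rw [show 2*(p+1)-p-2 = p from by omega, show 2*(p+1)-1 = 2*p+1 from by omega,
        show 2*(p+1)-p-1 = p+1 from by omega] at hupp
      have hmid : Summable (fun k : ℕ =>
          (Nat.choose (k+p) p : ℝ) / ((k:ℝ) + a) ^ (2*(p+1))) :=
        summable_pow p (2*(p+1)) hq ha
      have cpos : (0:ℝ) ≤ 2^p * lam^(p+1) / Real.sqrt π * Gm := by positivity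
      have hβ : lam/2 + (((p:ℝ)+1)/2 - (2*(p:ℝ)+1)) = a - (2*(p:ℝ)+1) := by
        rw [hadef]; ring
      have hprod2 : ∏ j ∈ Finset.range (p+1),
            (lam / (lam/2 + (((p:ℝ)+1)/2 - (2*(p:ℝ)+1)) + (j:ℝ)))
          = lam^(p+1) / moyalP (a - (2*(p:ℝ)+1)) (p+1) := by
        rw [Finset.prod_div_distrib, Finset.prod_const, Finset.card_range, moyalP]
        congr 1
        apply Finset.prod_congr rfl
        intro j _
        rw [hβ]
      have h2 : (∑' k : ℕ, (Nat.choose (k+p) p : ℝ) / ((k:ℝ) + a) ^ (2*(p+1)))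
          ≤ (Nat.factorial p : ℝ) /
            ((Nat.factorial (2*p+1) : ℝ) * moyalP (a - (2*(p:ℝ)+1)) (p+1)) := by
        rw [← hupp.tsum_eq]
        apply Summable.tsum_le_tsum _ hmid hupp.summable
        intro k
        apply div_le_div_of_nonneg_left (Nat.cast_nonneg _)
          (moyalP_pos (by positivity) _)
        apply moyalP_le_pow _ (by positivity)
        intro j hj
        have hj' : (j:ℝ) ≤ 2*(p:ℝ)+1 := by exact_mod_cast (show j ≤ 2*p+1 from by omega)
        linarith
      calc (2^p * lam^(p+1) / Real.sqrt π * Gm) *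
            ∑' k : ℕ, (Nat.choose (k+p) p : ℝ) / ((k:ℝ) + a) ^ (2*(p+1))
          ≤ (2^p * lam^(p+1) / Real.sqrt π * Gm) *
            ((Nat.factorial p : ℝ) /
              ((Nat.factorial (2*p+1) : ℝ) * moyalP (a - (2*(p:ℝ)+1)) (p+1))) :=
            mul_le_mul_of_nonneg_left h2 cpos
        _ = D * ∏ j ∈ Finset.range (p+1),
              (lam / (lam/2 + (((p:ℝ)+1)/2 - (2*(p:ℝ)+1)) + (j:ℝ))) := by
            rw [hprod2, hD]
            field_simp
end

section
/- The function ε(r) = C₁(r² − A²) + (C₂/(2r²))(r⁶ − A²r⁴ − 17A⁴r² + A⁶ + 12(r² − A²)A²r² ln r) − (1/(30A⁶r²(A² + r²)))·(A⁶ − 3A⁴r² + 6A²r⁴ + 6(r⁴ − A⁴)r² ln(r²/(A² + r²))) satisfies, for all r > 0, the ODE ε''(r) + ((3A² − 5r²)/(r(A² + r²)))·ε'(r) + (8/(A² + r²))·ε(r) + 8/(A² + r²)³ = 0, for any real constants C₁, C₂ and A > 0. -/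
noncomputable def mccEps (A C₁ C₂ : ℝ) : ℝ → ℝ := fun r =>
  C₁ * (r ^ 2 - A ^ 2)
    + C₂ / (2 * r ^ 2) *
        (r ^ 6 - A ^ 2 * r ^ 4 - 17 * A ^ 4 * r ^ 2 + A ^ 6
          + 12 * (r ^ 2 - A ^ 2) * A ^ 2 * r ^ 2 * Real.log r)
    - 1 / (30 * A ^ 6 * r ^ 2 * (A ^ 2 + r ^ 2)) *
        (A ^ 6 - 3 * A ^ 4 * r ^ 2 + 6 * A ^ 2 * r ^ 4
          + 6 * (r ^ 4 - A ^ 4) * r ^ 2 * Real.log (r ^ 2 / (A ^ 2 + r ^ 2)))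

noncomputable def mccEps' (A C₁ C₂ : ℝ) : ℝ → ℝ := fun r =>
  C₁ * (2 * r)
    + C₂ * (2 * r ^ 3 - A ^ 2 * r - A ^ 6 / r ^ 3 + 12 * A ^ 2 * r * Real.log r
        + 6 * A ^ 2 * (r ^ 2 - A ^ 2) / r)
    - 1 / (30 * A ^ 6) *
        (20 * A ^ 4 * r / (A ^ 2 + r ^ 2) ^ 2
          + 12 * r * Real.log (r ^ 2 / (A ^ 2 + r ^ 2))
          + 12 * A ^ 2 * (r ^ 2 - A ^ 2) / (r * (A ^ 2 + r ^ 2))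
          - 2 * A ^ 4 / r ^ 3)

noncomputable def mccEps'' (A C₁ C₂ : ℝ) : ℝ → ℝ := fun r =>
  C₁ * 2
    + C₂ * (6 * r ^ 2 - A ^ 2 + 3 * A ^ 6 / r ^ 4 + 12 * A ^ 2 * Real.log r
        + 18 * A ^ 2 + 6 * A ^ 4 / r ^ 2)
    - 1 / (30 * A ^ 6) *
        (6 * A ^ 4 / r ^ 4 + 20 * A ^ 4 * (A ^ 2 - 3 * r ^ 2) / (A ^ 2 + r ^ 2) ^ 3
          + 12 * Real.log (r ^ 2 / (A ^ 2 + r ^ 2)) + 24 * A ^ 2 / (A ^ 2 + r ^ 2)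
          + 12 * A ^ 2 * (4 * A ^ 2 * r ^ 2 + A ^ 4 - r ^ 4)
              / (r ^ 2 * (A ^ 2 + r ^ 2) ^ 2))

lemma mcc_hasDerivAt_log_frac (A : ℝ) (hA : 0 < A) {r : ℝ} (hr : 0 < r) :
    HasDerivAt (fun r : ℝ => Real.log (r ^ 2 / (A ^ 2 + r ^ 2)))
      (2 * A ^ 2 / (r * (A ^ 2 + r ^ 2))) r := by
  have hS : (0:ℝ) < A ^ 2 + r ^ 2 := by positivity
  have hSne : (A ^ 2 + r ^ 2) ≠ 0 := ne_of_gt hS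
  have hr0 : r ≠ 0 := ne_of_gt hr
  have hg : HasDerivAt (fun r : ℝ => r ^ 2 / (A ^ 2 + r ^ 2))
      (((2:ℕ) * r ^ 1 * (A ^ 2 + r ^ 2) - r ^ 2 * ((2:ℕ) * r ^ 1)) / (A ^ 2 + r ^ 2) ^ 2) r :=
    (hasDerivAt_pow 2 r).div ((hasDerivAt_pow 2 r).const_add (A ^ 2)) hSne
  have hgne : r ^ 2 / (A ^ 2 + r ^ 2) ≠ 0 := by positivity
  have h := (Real.hasDerivAt_log hgne).comp r hg
  refine h.congr_deriv ?_
  field_simp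
  ring

lemma mcc_hasDerivAt_eps (A C₁ C₂ : ℝ) (hA : 0 < A) {r : ℝ} (hr : 0 < r) :
    HasDerivAt (mccEps A C₁ C₂) (mccEps' A C₁ C₂ r) r := by
  have hr0 : r ≠ 0 := ne_of_gt hr
  have hS : (0:ℝ) < A ^ 2 + r ^ 2 := by positivity
  have hSne : (A ^ 2 + r ^ 2) ≠ 0 := ne_of_gt hS
  have hA0 : A ≠ 0 := ne_of_gt hA
  have h2r2 : (2 * r ^ 2 : ℝ) ≠ 0 := by positivity
  have hden : (30 * A ^ 6 * r ^ 2 * (A ^ 2 + r ^ 2) : ℝ) ≠ 0 := by positivity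
  have hlog := Real.hasDerivAt_log hr0
  have hL := mcc_hasDerivAt_log_frac A hA hr
  have h1 :=
    ((hasDerivAt_pow 2 r).sub_const (A ^ 2)).const_mul C₁
  have hfrac :=
    (hasDerivAt_const r C₂).div ((hasDerivAt_pow 2 r).const_mul 2) h2r2
  have hbig1 := ((((hasDerivAt_pow 6 r).sub ((hasDerivAt_pow 4 r).const_mul (A ^ 2))).sub
        ((hasDerivAt_pow 2 r).const_mul (17 * A ^ 4))).add_const (A ^ 6)).add
      (((((hasDerivAt_pow 2 r).sub_const (A ^ 2)).const_mul 12).mul_const (A ^ 2)).mul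
        (hasDerivAt_pow 2 r) |>.mul hlog)
  have hfrac2 :=
    (hasDerivAt_const r 1).div
      (((hasDerivAt_pow 2 r).const_mul (30 * A ^ 6)).mul
        ((hasDerivAt_pow 2 r).const_add (A ^ 2))) hden
  have hbig2 :=
    ((((hasDerivAt_pow 2 r).const_mul (3 * A ^ 4)).const_sub (A ^ 6)).add
        ((hasDerivAt_pow 4 r).const_mul (6 * A ^ 2))).add
      ((((hasDerivAt_pow 4 r).sub_const (A ^ 4)).const_mul 6).mul (hasDerivAt_pow 2 r) |>.mul hL)
  have H := (h1.add (hfrac.mul hbig1)).sub (hfrac2.mul hbig2)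
  unfold mccEps mccEps'
  refine H.congr_deriv ?_
  simp only [Pi.mul_apply, Pi.pow_apply, Pi.div_apply, Pi.sub_apply, Pi.add_apply]
  generalize Real.log (r ^ 2 / (A ^ 2 + r ^ 2)) = L
  push_cast
  field_simp
  ring

lemma mcc_hasDerivAt_eps' (A C₁ C₂ : ℝ) (hA : 0 < A) {r : ℝ} (hr : 0 < r) :
    HasDerivAt (mccEps' A C₁ C₂) (mccEps'' A C₁ C₂ r) r := by
  have hr0 : r ≠ 0 := ne_of_gt hr
  have hS : (0:ℝ) < A ^ 2 + r ^ 2 := by positivity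
  have hSne : (A ^ 2 + r ^ 2) ≠ 0 := ne_of_gt hS
  have hS2 : ((A ^ 2 + r ^ 2) ^ 2 : ℝ) ≠ 0 := by positivity
  have hr3 : (r ^ 3 : ℝ) ≠ 0 := by positivity
  have hrS : (r * (A ^ 2 + r ^ 2) : ℝ) ≠ 0 := by positivity
  have hA0 : A ≠ 0 := ne_of_gt hA
  have hlog := Real.hasDerivAt_log hr0
  have hL := mcc_hasDerivAt_log_frac A hA hr
  have h1 :=
    ((hasDerivAt_id' r).const_mul 2).const_mul C₁
  have hblock2 :=
    (((((hasDerivAt_pow 3 r).const_mul 2).sub ((hasDerivAt_id' r).const_mul (A ^ 2))).sub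
        ((hasDerivAt_const r (A ^ 6)).div (hasDerivAt_pow 3 r) hr3)).add
        (((hasDerivAt_id' r).const_mul (12 * A ^ 2)).mul hlog)).add
      ((((hasDerivAt_pow 2 r).sub_const (A ^ 2)).const_mul (6 * A ^ 2)).div
        (hasDerivAt_id' r) hr0)
  have hblock3 :=
    (((((hasDerivAt_id' r).const_mul (20 * A ^ 4)).div
          (((hasDerivAt_pow 2 r).const_add (A ^ 2)).pow 2) hS2).add
        (((hasDerivAt_id' r).const_mul 12).mul hL)).add
        ((((hasDerivAt_pow 2 r).sub_const (A ^ 2)).const_mul (12 * A ^ 2)).div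
          ((hasDerivAt_id' r).mul ((hasDerivAt_pow 2 r).const_add (A ^ 2))) hrS)).sub
      ((hasDerivAt_const r (2 * A ^ 4)).div (hasDerivAt_pow 3 r) hr3)
  have H := (h1.add (hblock2.const_mul C₂)).sub (hblock3.const_mul (1 / (30 * A ^ 6)))
  unfold mccEps' mccEps''
  refine H.congr_deriv ?_
  simp only [Pi.mul_apply, Pi.pow_apply, Pi.div_apply, Pi.sub_apply, Pi.add_apply]
  generalize Real.log (r ^ 2 / (A ^ 2 + r ^ 2)) = L
  push_cast
  field_simp
  ring

theorem moyal_constant_curvature_ode (A C₁ C₂ : ℝ) (hA : 0 < A)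
    (ε : ℝ → ℝ)
    (hε : ∀ r : ℝ, ε r =
      C₁ * (r ^ 2 - A ^ 2)
        + C₂ / (2 * r ^ 2) *
            (r ^ 6 - A ^ 2 * r ^ 4 - 17 * A ^ 4 * r ^ 2 + A ^ 6
              + 12 * (r ^ 2 - A ^ 2) * A ^ 2 * r ^ 2 * Real.log r)
        - 1 / (30 * A ^ 6 * r ^ 2 * (A ^ 2 + r ^ 2)) *
            (A ^ 6 - 3 * A ^ 4 * r ^ 2 + 6 * A ^ 2 * r ^ 4
              + 6 * (r ^ 4 - A ^ 4) * r ^ 2 * Real.log (r ^ 2 / (A ^ 2 + r ^ 2)))) :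
    ∀ r : ℝ, 0 < r →
      deriv (deriv ε) r
        + (3 * A ^ 2 - 5 * r ^ 2) / (r * (A ^ 2 + r ^ 2)) * deriv ε r
        + 8 / (A ^ 2 + r ^ 2) * ε r
        + 8 / (A ^ 2 + r ^ 2) ^ 3 = 0 := by
  have hfun : ε = mccEps A C₁ C₂ := funext fun r => hε r
  subst hfun
  intro r hr
  have hr0 : r ≠ 0 := ne_of_gt hr
  have hS : (0:ℝ) < A ^ 2 + r ^ 2 := by positivity
  have hSne : (A ^ 2 + r ^ 2) ≠ 0 := ne_of_gt hS
  have hA0 : A ≠ 0 := ne_of_gt hA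
  have hev : deriv (mccEps A C₁ C₂) =ᶠ[nhds r] mccEps' A C₁ C₂ := by
    filter_upwards [Ioi_mem_nhds hr] with x hx
    exact (mcc_hasDerivAt_eps A C₁ C₂ hA hx).deriv
  have h2 : deriv (deriv (mccEps A C₁ C₂)) r = mccEps'' A C₁ C₂ r := by
    rw [Filter.EventuallyEq.deriv_eq hev]
    exact (mcc_hasDerivAt_eps' A C₁ C₂ hA hr).deriv
  rw [h2, (mcc_hasDerivAt_eps A C₁ C₂ hA hr).deriv]
  unfold mccEps mccEps' mccEps''
  field_simp
  ring
end

section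
/- Let D be the 4n×4n real matrix D = c·[I_{4n} + (μ/(θ + √(θ²+μ²)))·(I_n ⊗ ε₂ ⊗ σ)], where c = √((θ + √(θ²+μ²))/(2√(θ²+μ²))), ε₂ = [[0,1],[−1,0]], σ = [[0,1],[1,0]], θ > 0 and μ real. Then D·Θ·Dᵀ = √(θ²+μ²)·(I_{2n} ⊗ ε₂), where Θ = θ·(I_{2n} ⊗ ε₂) + μ·(I_n ⊗ ε₂ ⊗ diag(1,−1)). -/
open Matrix
open scoped Kronecker

theorem moyal_deformed_transformation (n : ℕ) (θ μ : ℝ) (hθ : 0 < θ)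
    (ε₂ σ dg : Matrix (Fin 2) (Fin 2) ℝ)
    (hε₂ : ε₂ = !![0, 1; -1, 0]) (hσ : σ = !![0, 1; 1, 0])
    (hdg : dg = !![1, 0; 0, -1])
    (c : ℝ) (hc : c = Real.sqrt ((θ + Real.sqrt (θ ^ 2 + μ ^ 2)) / (2 * Real.sqrt (θ ^ 2 + μ ^ 2))))
    (D Θ : Matrix ((Fin n × Fin 2) × Fin 2) ((Fin n × Fin 2) × Fin 2) ℝ)
    (hD : D = c • ((1 : Matrix ((Fin n × Fin 2) × Fin 2) ((Fin n × Fin 2) × Fin 2) ℝ)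
        + (μ / (θ + Real.sqrt (θ ^ 2 + μ ^ 2))) •
            (((1 : Matrix (Fin n) (Fin n) ℝ) ⊗ₖ ε₂) ⊗ₖ σ)))
    (hΘ : Θ = θ • (((1 : Matrix (Fin n) (Fin n) ℝ) ⊗ₖ (1 : Matrix (Fin 2) (Fin 2) ℝ)) ⊗ₖ ε₂)
        + μ • (((1 : Matrix (Fin n) (Fin n) ℝ) ⊗ₖ ε₂) ⊗ₖ dg)) :
    D * Θ * Dᵀ =
      Real.sqrt (θ ^ 2 + μ ^ 2) •
        (((1 : Matrix (Fin n) (Fin n) ℝ) ⊗ₖ (1 : Matrix (Fin 2) (Fin 2) ℝ)) ⊗ₖ ε₂) := by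
  set r : ℝ := Real.sqrt (θ ^ 2 + μ ^ 2) with hr
  have hr0 : 0 < r := Real.sqrt_pos.mpr (by positivity)
  have hr2 : r ^ 2 = θ ^ 2 + μ ^ 2 := Real.sq_sqrt (by positivity)
  have hθr : 0 < θ + r := by linarith
  set k : ℝ := μ / (θ + r) with hk
  -- c^2
  have hc2 : c ^ 2 = (θ + r) / (2 * r) := by
    rw [hc, Real.sq_sqrt]
    positivity
  -- 2x2 identities
  have h1 : σ * ε₂ = (-1 : ℝ) • dg := by
    subst hε₂ hσ hdg
    rw [Matrix.mul_fin_two]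
    norm_num [Matrix.smul_of, Matrix.smul_cons]
  have h2 : ε₂ * σ = dg := by
    subst hε₂ hσ hdg
    rw [Matrix.mul_fin_two]
    norm_num
  have h3 : ε₂ * ε₂ = (-1 : ℝ) • (1 : Matrix (Fin 2) (Fin 2) ℝ) := by
    subst hε₂
    rw [Matrix.mul_fin_two, Matrix.one_fin_two]
    norm_num [Matrix.smul_of, Matrix.smul_cons]
  have h4 : σ * dg = (-1 : ℝ) • ε₂ := by
    subst hε₂ hσ hdg
    rw [Matrix.mul_fin_two]
    norm_num [Matrix.smul_of, Matrix.smul_cons]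
  have h5 : dg * σ = ε₂ := by
    subst hε₂ hσ hdg
    rw [Matrix.mul_fin_two]
    norm_num
  have h6 : σᵀ = σ := by
    subst hσ; ext i j; fin_cases i <;> fin_cases j <;> simp
  have h7 : ε₂ᵀ = (-1 : ℝ) • ε₂ := by
    subst hε₂; ext i j; fin_cases i <;> fin_cases j <;> simp
  set E : Matrix ((Fin n × Fin 2) × Fin 2) ((Fin n × Fin 2) × Fin 2) ℝ :=
    ((1 : Matrix (Fin n) (Fin n) ℝ) ⊗ₖ (1 : Matrix (Fin 2) (Fin 2) ℝ)) ⊗ₖ ε₂ with hE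
  set S : Matrix ((Fin n × Fin 2) × Fin 2) ((Fin n × Fin 2) × Fin 2) ℝ :=
    ((1 : Matrix (Fin n) (Fin n) ℝ) ⊗ₖ ε₂) ⊗ₖ σ with hS
  set F : Matrix ((Fin n × Fin 2) × Fin 2) ((Fin n × Fin 2) × Fin 2) ℝ :=
    ((1 : Matrix (Fin n) (Fin n) ℝ) ⊗ₖ ε₂) ⊗ₖ dg with hF
  have hSE : S * E = (-1 : ℝ) • F := by
    rw [hS, hE, hF, ← Matrix.mul_kronecker_mul, ← Matrix.mul_kronecker_mul]
    simp only [Matrix.one_mul, Matrix.mul_one]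
    rw [h1, Matrix.kronecker_smul]
  have hES : E * S = F := by
    rw [hS, hE, hF, ← Matrix.mul_kronecker_mul, ← Matrix.mul_kronecker_mul]
    simp only [Matrix.one_mul, Matrix.mul_one]
    rw [h2]
  have hSF : S * F = E := by
    rw [hS, hE, hF, ← Matrix.mul_kronecker_mul, ← Matrix.mul_kronecker_mul]
    simp only [Matrix.one_mul, Matrix.mul_one]
    rw [h3, h4]
    simp only [Matrix.kronecker_smul, Matrix.smul_kronecker, smul_smul]
    norm_num
  have hFS : F * S = (-1 : ℝ) • E := by
    rw [hS, hE, hF, ← Matrix.mul_kronecker_mul, ← Matrix.mul_kronecker_mul]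
    simp only [Matrix.one_mul, Matrix.mul_one]
    rw [h3, h5]
    simp only [Matrix.kronecker_smul, Matrix.smul_kronecker, smul_smul]
  have hDT : Dᵀ = c • ((1 : Matrix ((Fin n × Fin 2) × Fin 2) ((Fin n × Fin 2) × Fin 2) ℝ)
      + (-k) • S) := by
    rw [hD, Matrix.transpose_smul, Matrix.transpose_add, Matrix.transpose_one,
      Matrix.transpose_smul, hS, ← Matrix.kroneckerMap_transpose,
      ← Matrix.kroneckerMap_transpose, Matrix.transpose_one, h6, h7,
      Matrix.kronecker_smul, Matrix.smul_kronecker, smul_smul]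
    norm_num
  rw [hDT, hD, hΘ]
  rw [Matrix.smul_mul, Matrix.mul_smul, Matrix.smul_mul]
  simp only [Matrix.add_mul, Matrix.mul_add, Matrix.smul_mul, Matrix.mul_smul,
    Matrix.one_mul, Matrix.mul_one, hSE, hES, hSF, hFS, smul_smul, smul_add]
  match_scalars
  · have h1' : c ^ 2 * (θ + 2 * k * μ - k ^ 2 * θ) = r := by
      rw [hc2, hk]
      field_simp
      linear_combination (-(θ + 2 * r)) * hr2
    linear_combination h1'
  · have h0 : μ - 2 * k * θ - k ^ 2 * μ = 0 := by
      rw [hk]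
      field_simp
      linear_combination μ * hr2
    linear_combination (c * c) * h0
end

section
/- With D as above (θ > 0, μ ∈ ℝ, c = √((θ + √(θ²+μ²))/(2√(θ²+μ²)))), the determinant of D equals 1. -/
open Matrix
open scoped Kronecker

theorem moyal_deformed_transformation_det (n : ℕ) (θ μ : ℝ) (hθ : 0 < θ)
    (ε₂ σ : Matrix (Fin 2) (Fin 2) ℝ)
    (hε₂ : ε₂ = !![0, 1; -1, 0]) (hσ : σ = !![0, 1; 1, 0])
    (c : ℝ) (hc : c = Real.sqrt ((θ + Real.sqrt (θ ^ 2 + μ ^ 2)) / (2 * Real.sqrt (θ ^ 2 + μ ^ 2))))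
    (D : Matrix ((Fin n × Fin 2) × Fin 2) ((Fin n × Fin 2) × Fin 2) ℝ)
    (hD : D = c • ((1 : Matrix ((Fin n × Fin 2) × Fin 2) ((Fin n × Fin 2) × Fin 2) ℝ)
        + (μ / (θ + Real.sqrt (θ ^ 2 + μ ^ 2))) •
            (((1 : Matrix (Fin n) (Fin n) ℝ) ⊗ₖ ε₂) ⊗ₖ σ))) :
    D.det = 1 := by
  set s : ℝ := Real.sqrt (θ ^ 2 + μ ^ 2) with hs
  have hsq : s ^ 2 = θ ^ 2 + μ ^ 2 := Real.sq_sqrt (by positivity)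
  have hs0 : 0 < s := Real.sqrt_pos.mpr (by positivity)
  have hts : 0 < θ + s := by linarith
  set a : ℝ := μ / (θ + s) with ha
  -- the scalar identity
  have hc2 : c ^ 2 = (θ + s) / (2 * s) := by
    rw [hc, Real.sq_sqrt (by positivity)]
  have key : c ^ 2 * (1 + a ^ 2) = 1 := by
    rw [hc2, ha]
    field_simp
    nlinarith [hsq]
  -- the matrix part
  subst hD hε₂ hσ
  rw [Matrix.det_smul]
  have hcard : Fintype.card ((Fin n × Fin 2) × Fin 2) = 4 * n := by
    simp [Fintype.card_prod]; ring
  rw [hcard]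
  -- reassociate the Kronecker product
  have e := Equiv.prodAssoc (Fin n) (Fin 2) (Fin 2)
  rw [← Matrix.det_reindex_self (Equiv.prodAssoc (Fin n) (Fin 2) (Fin 2))
    ((1 : Matrix ((Fin n × Fin 2) × Fin 2) ((Fin n × Fin 2) × Fin 2) ℝ)
      + a • (((1 : Matrix (Fin n) (Fin n) ℝ) ⊗ₖ !![0, 1; -1, 0]) ⊗ₖ !![0, 1; 1, 0]))]
  have hre : (reindex (Equiv.prodAssoc (Fin n) (Fin 2) (Fin 2)) (Equiv.prodAssoc (Fin n) (Fin 2) (Fin 2)))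
      ((1 : Matrix ((Fin n × Fin 2) × Fin 2) ((Fin n × Fin 2) × Fin 2) ℝ)
        + a • (((1 : Matrix (Fin n) (Fin n) ℝ) ⊗ₖ !![0, 1; -1, 0]) ⊗ₖ !![0, 1; 1, 0]))
      = (1 : Matrix (Fin n) (Fin n) ℝ) ⊗ₖ
          ((1 : Matrix (Fin 2 × Fin 2) (Fin 2 × Fin 2) ℝ)
            + a • ((!![0, 1; -1, 0] : Matrix (Fin 2) (Fin 2) ℝ) ⊗ₖ !![0, 1; 1, 0])) := by
    rw [Matrix.kronecker_add, Matrix.kronecker_smul, Matrix.one_kronecker_one]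
    simp [Matrix.reindex_apply, Matrix.submatrix_add, Matrix.submatrix_smul,
      Matrix.submatrix_one_equiv]
  rw [hre, Matrix.det_kronecker]
  have h4 : Matrix.det ((1 : Matrix (Fin 2 × Fin 2) (Fin 2 × Fin 2) ℝ)
      + a • ((!![0, 1; -1, 0] : Matrix (Fin 2) (Fin 2) ℝ) ⊗ₖ !![0, 1; 1, 0])) = (1 + a ^ 2) ^ 2 := by
    rw [← Matrix.det_reindex_self (finProdFinEquiv (m := 2) (n := 2))]
    have hE : reindex (finProdFinEquiv (m := 2) (n := 2)) finProdFinEquiv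
        ((1 : Matrix (Fin 2 × Fin 2) (Fin 2 × Fin 2) ℝ)
          + a • ((!![0, 1; -1, 0] : Matrix (Fin 2) (Fin 2) ℝ) ⊗ₖ !![0, 1; 1, 0]))
        = !![1,0,0,a;0,1,a,0;0,-a,1,0;-a,0,0,1] := by
      ext i j
      fin_cases i <;> fin_cases j <;>
        simp [kroneckerMap_apply, finProdFinEquiv, Fin.divNat, Fin.modNat,
          Matrix.one_apply, Fin.ext_iff, Prod.ext_iff] <;>
        simp_all [show ((3:Fin 4):ℕ) = 3 from rfl, show ((2:Fin 4):ℕ) = 2 from rfl, Fin.ext_iff]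
    rw [hE]
    simp [Matrix.det_succ_row_zero, Fin.sum_univ_succ, Fin.castSucc, Fin.castAdd, Fin.castLE]
    simp [show (Fin.succAbove (3 : Fin 4) (2 : Fin 3)) = 2 from rfl]
    ring
  rw [h4]
  simp only [Matrix.det_one, one_pow, one_mul, Fintype.card_fin]
  have h1 : c ^ (4 * n) = (c ^ 2) ^ (2 * n) := by
    rw [← pow_mul]; congr 1; ring
  have h2 : ((1 + a ^ 2) ^ 2) ^ n = (1 + a ^ 2) ^ (2 * n) := by
    rw [← pow_mul]
  rw [h1, h2, ← mul_pow, key, one_pow]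
end
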